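/- arXiv:1002.0688 — 2 statements merged into one kernel-verified Lean document; each statement's English description precedes it below -/
import Mathlib

section
/- The 8×8 block-diagonal matrices diag(M1(a1,a2,a3,a4), M2(a1,a2,a3,a5)), where M1 has rows (0,-a1,0,a4),(0,0,-a1,a3),(0,0,0,a2),(0,0,0,0) and M2 has rows (0,a2,0,a5),(0,0,a2,-a3),(0,0,0,-a1),(0,0,0,0), form a 5-dimensional Lie algebra under [A,B] = BA − AB whose generators l1,…,l5 (given by a_j = δ_ij) satisfy [l1,l2]=l3, [l1,l3]=l4, [l2,l3]=l5, and all other brackets of pairs of generators vanish. -/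
/-- The block M₁(a₁,a₂,a₃,a₄). -/
def CartanM₁ (a₁ a₂ a₃ a₄ : ℝ) : Matrix (Fin 4) (Fin 4) ℝ :=
  !![0, -a₁, 0, a₄;
     0, 0, -a₁, a₃;
     0, 0, 0, a₂;
     0, 0, 0, 0]

/-- The block M₂(a₁,a₂,a₃,a₅). -/
def CartanM₂ (a₁ a₂ a₃ a₅ : ℝ) : Matrix (Fin 4) (Fin 4) ℝ :=
  !![0, a₂, 0, a₅;
     0, 0, a₂, -a₃;
     0, 0, 0, -a₁;
     0, 0, 0, 0]

/-- The block-diagonal 8×8 matrix diag(M₁(a₁,a₂,a₃,a₄), M₂(a₁,a₂,a₃,a₅)). -/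
def CartanM (a₁ a₂ a₃ a₄ a₅ : ℝ) : Matrix (Fin 4 ⊕ Fin 4) (Fin 4 ⊕ Fin 4) ℝ :=
  Matrix.fromBlocks (CartanM₁ a₁ a₂ a₃ a₄) 0 0 (CartanM₂ a₁ a₂ a₃ a₅)

/-- The bracket [A,B] := BA − AB. -/
def mbracket8 (A B : Matrix (Fin 4 ⊕ Fin 4) (Fin 4 ⊕ Fin 4) ℝ) :
    Matrix (Fin 4 ⊕ Fin 4) (Fin 4 ⊕ Fin 4) ℝ := B * A - A * B

/-!
The bracket of two members of the family is again a member, with coordinates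
(0, 0, a₁b₂ − a₂b₁, a₁b₃ − a₃b₁, a₂b₃ − a₃b₂); every structure constant is read off from this
single formula. Linear independence holds because `a ↦ CartanM a` is linear and injective, so it
carries the standard basis of ℝ⁵ to an independent family.
-/

lemma CartanM₁_mul_CartanM₁ (a₁ a₂ a₃ a₄ b₁ b₂ b₃ b₄ : ℝ) :
    CartanM₁ a₁ a₂ a₃ a₄ * CartanM₁ b₁ b₂ b₃ b₄ =
      !![0, 0, a₁ * b₁, -(a₁ * b₃); 0, 0, 0, -(a₁ * b₂); 0, 0, 0, 0; 0, 0, 0, 0] := by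
  ext i j
  fin_cases i <;> fin_cases j <;> simp [CartanM₁, Matrix.mul_apply, Fin.sum_univ_four]

lemma CartanM₂_mul_CartanM₂ (a₁ a₂ a₃ a₅ b₁ b₂ b₃ b₅ : ℝ) :
    CartanM₂ a₁ a₂ a₃ a₅ * CartanM₂ b₁ b₂ b₃ b₅ =
      !![0, 0, a₂ * b₂, -(a₂ * b₃); 0, 0, 0, -(a₂ * b₁); 0, 0, 0, 0; 0, 0, 0, 0] := by
  ext i j
  fin_cases i <;> fin_cases j <;> simp [CartanM₂, Matrix.mul_apply, Fin.sum_univ_four]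

lemma mbracket8_CartanM (a₁ a₂ a₃ a₄ a₅ b₁ b₂ b₃ b₄ b₅ : ℝ) :
    mbracket8 (CartanM a₁ a₂ a₃ a₄ a₅) (CartanM b₁ b₂ b₃ b₄ b₅) =
      CartanM 0 0 (a₁ * b₂ - a₂ * b₁) (a₁ * b₃ - a₃ * b₁) (a₂ * b₃ - a₃ * b₂) := by
  simp only [mbracket8, CartanM, Matrix.fromBlocks_multiply, CartanM₁_mul_CartanM₁,
    CartanM₂_mul_CartanM₂, Matrix.mul_zero, Matrix.zero_mul, add_zero, zero_add]
  ext (i | i) (j | j) <;> fin_cases i <;> fin_cases j <;> simp [CartanM₁, CartanM₂] <;> ring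

lemma CartanM_add (a₁ a₂ a₃ a₄ a₅ b₁ b₂ b₃ b₄ b₅ : ℝ) :
    CartanM a₁ a₂ a₃ a₄ a₅ + CartanM b₁ b₂ b₃ b₄ b₅ =
      CartanM (a₁ + b₁) (a₂ + b₂) (a₃ + b₃) (a₄ + b₄) (a₅ + b₅) := by
  ext (i | i) (j | j) <;> fin_cases i <;> fin_cases j <;> simp [CartanM, CartanM₁, CartanM₂] <;> ring

lemma CartanM_smul (c a₁ a₂ a₃ a₄ a₅ : ℝ) :
    c • CartanM a₁ a₂ a₃ a₄ a₅ = CartanM (c * a₁) (c * a₂) (c * a₃) (c * a₄) (c * a₅) := by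
  ext (i | i) (j | j) <;> fin_cases i <;> fin_cases j <;> simp [CartanM, CartanM₁, CartanM₂]

lemma CartanM_zero : CartanM 0 0 0 0 0 = 0 := by
  ext (i | i) (j | j) <;> fin_cases i <;> fin_cases j <;> simp [CartanM, CartanM₁, CartanM₂]

lemma CartanM_eq_zero_iff {a₁ a₂ a₃ a₄ a₅ : ℝ} :
    CartanM a₁ a₂ a₃ a₄ a₅ = 0 ↔ a₁ = 0 ∧ a₂ = 0 ∧ a₃ = 0 ∧ a₄ = 0 ∧ a₅ = 0 := by
  constructor
  · intro h
    have h₁ := congr_fun₂ h (.inl 0) (.inl 1)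
    have h₂ := congr_fun₂ h (.inl 2) (.inl 3)
    have h₃ := congr_fun₂ h (.inl 1) (.inl 3)
    have h₄ := congr_fun₂ h (.inl 0) (.inl 3)
    have h₅ := congr_fun₂ h (.inr 0) (.inr 3)
    simp [CartanM, CartanM₁, CartanM₂] at h₁ h₂ h₃ h₄ h₅
    exact ⟨h₁, h₂, h₃, h₄, h₅⟩
  · rintro ⟨rfl, rfl, rfl, rfl, rfl⟩
    exact CartanM_zero

def cartanLinearMap : (Fin 5 → ℝ) →ₗ[ℝ] Matrix (Fin 4 ⊕ Fin 4) (Fin 4 ⊕ Fin 4) ℝ where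
  toFun a := CartanM (a 0) (a 1) (a 2) (a 3) (a 4)
  map_add' _ _ := (CartanM_add ..).symm
  map_smul' _ _ := (CartanM_smul ..).symm

lemma ker_cartanLinearMap : LinearMap.ker cartanLinearMap = ⊥ := by
  refine LinearMap.ker_eq_bot'.2 fun a ha => ?_
  obtain ⟨h₀, h₁, h₂, h₃, h₄⟩ := CartanM_eq_zero_iff.1 ha
  ext i
  fin_cases i <;> assumption

lemma linearIndependent_CartanM :
    LinearIndependent ℝ ![CartanM 1 0 0 0 0, CartanM 0 1 0 0 0, CartanM 0 0 1 0 0,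
      CartanM 0 0 0 1 0, CartanM 0 0 0 0 1] := by
  have hbasis : ![CartanM 1 0 0 0 0, CartanM 0 1 0 0 0, CartanM 0 0 1 0 0,
      CartanM 0 0 0 1 0, CartanM 0 0 0 0 1] = cartanLinearMap ∘ Pi.basisFun ℝ (Fin 5) := by
    ext1 i
    fin_cases i <;> simp [cartanLinearMap]
  rw [hbasis]
  exact (Pi.basisFun ℝ (Fin 5)).linearIndependent.map' _ ker_cartanLinearMap

theorem stmt9 :
    let l₁ := CartanM 1 0 0 0 0
    let l₂ := CartanM 0 1 0 0 0
    let l₃ := CartanM 0 0 1 0 0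
    let l₄ := CartanM 0 0 0 1 0
    let l₅ := CartanM 0 0 0 0 1
    LinearIndependent ℝ ![l₁, l₂, l₃, l₄, l₅] ∧
    mbracket8 l₁ l₂ = l₃ ∧ mbracket8 l₁ l₃ = l₄ ∧ mbracket8 l₂ l₃ = l₅ ∧
    mbracket8 l₁ l₄ = 0 ∧ mbracket8 l₁ l₅ = 0 ∧ mbracket8 l₂ l₄ = 0 ∧ mbracket8 l₂ l₅ = 0 ∧
    mbracket8 l₃ l₄ = 0 ∧ mbracket8 l₃ l₅ = 0 ∧ mbracket8 l₄ l₅ = 0 := by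
  refine ⟨linearIndependent_CartanM, ?_⟩
  simp only [mbracket8_CartanM]
  norm_num [CartanM_zero]
end

section
/- For each λ ≠ 0 and μ ∈ ℝ, the map X^{λ,μ} assigning to (x1,x2,x3,x4) ∈ ℝ⁴ the operator on L²(ℝ,ℂ) defined by (X^{λ,μ}(x)ψ)(θ) = exp(i(−(μ/(2λ)) x2 + λ x4 − λ x3 θ + (λ/2) x2 θ²)) ψ(θ + x1) is a group homomorphism from the Engel group (ℝ⁴ with product (x1,x2,x3,x4)·(y1,y2,y3,y4) = (x1+y1, x2+y2, x3+y3−x1 y2, x4+y4+½ x1² y2 − x1 y3)) into the unitary operators on L²(ℝ,ℂ). -/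
open MeasureTheory

/-- The Engel group product on ℝ⁴. -/
noncomputable def engelMul (x y : ℝ × ℝ × ℝ × ℝ) : ℝ × ℝ × ℝ × ℝ :=
  (x.1 + y.1, x.2.1 + y.2.1, x.2.2.1 + y.2.2.1 - x.1 * y.2.1,
   x.2.2.2 + y.2.2.2 + (1 / 2) * x.1 ^ 2 * y.2.1 - x.1 * y.2.2.1)

/-- The representation 𝔛^{λ,μ} of the Engel group, acting on functions ℝ → ℂ. -/
noncomputable def engelRep (l μ : ℝ) (x : ℝ × ℝ × ℝ × ℝ) (ψ : ℝ → ℂ) : ℝ → ℂ :=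
  fun θ => Complex.exp (Complex.I *
      (-(↑μ / (2 * ↑l)) * ↑x.2.1 + ↑l * ↑x.2.2.2 - ↑l * ↑x.2.2.1 * ↑θ +
        (↑l / 2) * ↑x.2.1 * ↑θ ^ 2)) * ψ (θ + x.1)

theorem eLpNorm_comp_add_right {G E : Type*} [MeasurableSpace G] [AddGroup G] [MeasurableAdd G]
    [TopologicalSpace E] [ContinuousENorm E] (μ : Measure G) [μ.IsAddRightInvariant]
    (f : G → E) (a : G) (p : ENNReal) :
    eLpNorm (fun x => f (x + a)) p μ = eLpNorm f p μ := by
  change eLpNorm (f ∘ (· + a)) p μ = _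
  rw [← (measurableEmbedding_addRight a).eLpNorm_map_measure, map_add_right_eq_self]

theorem engelRep_engelMul (l μ : ℝ) (x y : ℝ × ℝ × ℝ × ℝ) (ψ : ℝ → ℂ) :
    engelRep l μ (engelMul x y) ψ = engelRep l μ x (engelRep l μ y ψ) := by
  funext θ
  simp only [engelRep, engelMul]
  rw [← mul_assoc, ← Complex.exp_add, ← mul_add, add_assoc θ]
  congr 3
  push_cast
  ring

theorem engelRep_zero (l μ : ℝ) (ψ : ℝ → ℂ) : engelRep l μ (0, 0, 0, 0) ψ = ψ := by
  funext θ
  simp [engelRep]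

theorem norm_engelRep_apply (l μ : ℝ) (x : ℝ × ℝ × ℝ × ℝ) (ψ : ℝ → ℂ) (θ : ℝ) :
    ‖engelRep l μ x ψ θ‖ = ‖ψ (θ + x.1)‖ := by
  rw [engelRep, norm_mul, mul_comm Complex.I]
  norm_cast
  rw [Complex.norm_exp_ofReal_mul_I, one_mul]

theorem eLpNorm_engelRep (l μ : ℝ) (x : ℝ × ℝ × ℝ × ℝ) (ψ : ℝ → ℂ) (p : ENNReal) :
    eLpNorm (engelRep l μ x ψ) p volume = eLpNorm ψ p volume := by
  rw [eLpNorm_congr_norm_ae (ae_of_all _ (norm_engelRep_apply l μ x ψ))]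
  exact eLpNorm_comp_add_right volume ψ x.1 p

theorem stmt12_general (l μ : ℝ) :
    (∀ x y : ℝ × ℝ × ℝ × ℝ, ∀ ψ : ℝ → ℂ,
      engelRep l μ (engelMul x y) ψ = engelRep l μ x (engelRep l μ y ψ)) ∧
    (∀ ψ : ℝ → ℂ, engelRep l μ (0, 0, 0, 0) ψ = ψ) ∧
    (∀ x : ℝ × ℝ × ℝ × ℝ, ∀ ψ : ℝ → ℂ,
      eLpNorm (engelRep l μ x ψ) 2 volume = eLpNorm ψ 2 volume) :=
  ⟨engelRep_engelMul l μ, engelRep_zero l μ, fun x ψ => eLpNorm_engelRep l μ x ψ 2⟩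

theorem stmt12 (l μ : ℝ) (hl : l ≠ 0) :
    (∀ x y : ℝ × ℝ × ℝ × ℝ, ∀ ψ : ℝ → ℂ,
      engelRep l μ (engelMul x y) ψ = engelRep l μ x (engelRep l μ y ψ)) ∧
    (∀ ψ : ℝ → ℂ, engelRep l μ (0, 0, 0, 0) ψ = ψ) ∧
    (∀ x : ℝ × ℝ × ℝ × ℝ, ∀ ψ : ℝ → ℂ,
      eLpNorm (engelRep l μ x ψ) 2 volume = eLpNorm ψ 2 volume) :=
  stmt12_general l μ
end
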